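/- For the path P_k on k vertices (k ≥ 4), the 2-coloring of K_{k + ⌊k/2⌋ - 2} consisting of two disjoint blue cliques of sizes k-1 and ⌊k/2⌋-1 with all crossing edges red contains no monochromatic copy of P_k; hence r(P_k) ≥ k + ⌊k/2⌋ - 1. -/

import Mathlib

open SimpleGraph

/-- The graph of edges of color `b` in the 2-coloring `c` of a complete graph. -/
def colorGraph {V : Type*} (c : Sym2 V → Bool) (b : Bool) : SimpleGraph V :=
  SimpleGraph.fromRel (fun u v => c s(u, v) = b)

/-- `G` occurs as a (not nec. induced) subgraph of `H`. -/
def ContainsCopy {V W : Type*} (G : SimpleGraph V) (H : SimpleGraph W) : Prop :=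
  ∃ f : V → W, Function.Injective f ∧ ∀ ⦃u v : V⦄, G.Adj u v → H.Adj (f u) (f v)

/-- The coloring `c` contains a monochromatic copy of `G`. -/
def HasMonoCopy {V W : Type*} (G : SimpleGraph V) (c : Sym2 W → Bool) : Prop :=
  ∃ b : Bool, ContainsCopy G (colorGraph c b)

/-- The (diagonal) Ramsey number of a graph `G`. -/
noncomputable def ramseyNumber {V : Type*} (G : SimpleGraph V) : ℕ :=
  sInf {r : ℕ | ∀ c : Sym2 (Fin r) → Bool, HasMonoCopy G c}

/-- The star `S n = K_{1,n}`: center `0`, `n` leaves. -/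
def starGraph (n : ℕ) : SimpleGraph (Fin (n + 1)) :=
  SimpleGraph.fromRel (fun u v => u = 0)

/-- The bistar `B(m,n)`: adjacent centers `inl 0`, `inl 1`, with `m` resp. `n` leaves. -/
def bistar (m n : ℕ) : SimpleGraph (Fin 2 ⊕ Fin m ⊕ Fin n) :=
  SimpleGraph.fromRel (fun u v =>
    (u = Sum.inl 0 ∧ v = Sum.inl 1) ∨
    (u = Sum.inl 0 ∧ ∃ i, v = Sum.inr (Sum.inl i)) ∨
    (u = Sum.inl 1 ∧ ∃ j, v = Sum.inr (Sum.inr j)))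


/-!
Blue edges stay inside a side and red edges cross between the sides. A blue path is connected,
so it lies in one side, and both sides have fewer than `k` vertices. A red path on `k` vertices
contains `⌊k/2⌋` disjoint edges `{2j, 2j+1}`, each with an end in the small side, which has only
`⌊k/2⌋ - 1` vertices.

For the bound on `r(P_k)`: the Erdős–Szekeres bound gives a monochromatic `K_{n+1}` in every
2-colouring of `K_{binom(2n, n)}`, so some `r` works, and whatever works for `r` works for every
larger `r`; a colouring of `K_N` without monochromatic `P_k` therefore forces `r(P_k) > N`.
-/

open Finset

section ColorGraph

variable {U V W : Type*} {c : Sym2 W → Bool} {b : Bool} {u v : W}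

lemma colorGraph_adj : (colorGraph c b).Adj u v ↔ u ≠ v ∧ c s(u, v) = b := by
  rw [colorGraph, fromRel_adj, Sym2.eq_swap, or_self]

lemma containsCopy_iff_isContained {G : SimpleGraph V} {H : SimpleGraph W} :
    ContainsCopy G H ↔ G ⊑ H :=
  ⟨fun ⟨f, hf, hadj⟩ => ⟨⟨⟨f, fun h => hadj h⟩, hf⟩⟩,
    fun ⟨f⟩ => ⟨f, f.injective, fun _ _ h => f.toHom.map_adj h⟩⟩

lemma colorGraph_comp_map (f : V ↪ W) :
    colorGraph (fun e => c (e.map f)) b = (colorGraph c b).comap f := by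
  ext u v
  simp only [colorGraph_adj, comap_adj, Sym2.map_mk, f.injective.ne_iff]

lemma HasMonoCopy.of_comp_map {G : SimpleGraph U} (f : V ↪ W)
    (h : HasMonoCopy G (fun e => c (e.map f))) : HasMonoCopy G c := by
  obtain ⟨b, hb⟩ := h
  rw [containsCopy_iff_isContained, colorGraph_comp_map] at hb
  exact ⟨b, containsCopy_iff_isContained.mpr (hb.trans (Embedding.comap f _).isContained)⟩

end ColorGraph

section Ramsey

variable {V : Type*} [DecidableEq V]

lemma exists_isNClique_insert {c : Sym2 V → Bool} {b : Bool} {A S : Finset V} {v : V} {n : ℕ}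
    (hv : v ∈ A) (hS : S ⊆ (A.erase v).filter (fun u => c s(v, u) = b))
    (hclique : (colorGraph c b).IsNClique n S) :
    ∃ S' ⊆ A, (colorGraph c b).IsNClique (n + 1) S' := by
  refine ⟨insert v S, insert_subset hv ?_, hclique.insert fun u hu => ?_⟩
  · exact hS.trans ((filter_subset _ _).trans (erase_subset v A))
  · obtain ⟨huA, hvu⟩ := mem_filter.mp (hS hu)
    exact colorGraph_adj.mpr ⟨(ne_of_mem_erase huA).symm, hvu⟩

theorem exists_isNClique_colorGraph (c : Sym2 V → Bool) (s t : ℕ) (A : Finset V)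
    (hA : (s + t).choose s ≤ #A) :
    (∃ S ⊆ A, (colorGraph c true).IsNClique (s + 1) S) ∨
      ∃ T ⊆ A, (colorGraph c false).IsNClique (t + 1) T := by
  have hne {s t : ℕ} {A : Finset V} (h : (s + t).choose s ≤ #A) : A.Nonempty :=
    card_pos.mp ((Nat.choose_pos (by omega)).trans_le h)
  induction s generalizing t A with
  | zero =>
    obtain ⟨v, hv⟩ := hne hA
    exact .inl ⟨{v}, by simpa, isNClique_singleton.mpr rfl⟩
  | succ s ihs =>
    induction t generalizing A with
    | zero =>
      obtain ⟨v, hv⟩ := hne hA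
      exact .inr ⟨{v}, by simpa, isNClique_singleton.mpr rfl⟩
    | succ t iht =>
      obtain ⟨v, hv⟩ := hne hA
      set R := (A.erase v).filter (fun u => c s(v, u) = true)
      set B := (A.erase v).filter (fun u => c s(v, u) = false)
      have hsub {b : Bool} : (A.erase v).filter (fun u => c s(v, u) = b) ⊆ A :=
        (filter_subset _ _).trans (erase_subset v A)
      have hRB : #R + #B + 1 = #A := by
        have := card_filter_add_card_filter_not (s := A.erase v) (fun u => c s(v, u) = true)
        simp only [Bool.not_eq_true] at this
        rw [this, card_erase_add_one hv]
      -- Pascal's rule: one of `R`, `B` is large enough for the induction hypothesis.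
      have hpascal := Nat.choose_succ_succ' (s + t + 1) s
      rw [show s + 1 + (t + 1) = s + t + 1 + 1 by omega] at hA
      by_cases hR : (s + (t + 1)).choose s ≤ #R
      · rcases ihs (t + 1) R hR with ⟨S, hSR, hS⟩ | ⟨T, hTR, hT⟩
        · exact .inl (exists_isNClique_insert hv hSR hS)
        · exact .inr ⟨T, hTR.trans hsub, hT⟩
      · have hB : (s + 1 + t).choose (s + 1) ≤ #B := by
          rw [show s + (t + 1) = s + t + 1 by omega] at hR
          rw [show s + 1 + t = s + t + 1 by omega]
          omega
        rcases iht B hB with ⟨S, hSB, hS⟩ | ⟨T, hTB, hT⟩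
        · exact .inl ⟨S, hSB.trans hsub, hS⟩
        · exact .inr (exists_isNClique_insert hv hTB hT)

end Ramsey

section RamseyNumber

variable {V W : Type*}

lemma containsCopy_of_isNClique [Fintype V] {G : SimpleGraph V} {H : SimpleGraph W} {n : ℕ}
    {S : Finset W} (hS : H.IsNClique n S) (hn : Fintype.card V ≤ n) : ContainsCopy G H := by
  have hG : G ⊑ completeGraph (Fin n) :=
    isContained_top_iff.mpr (Function.Embedding.nonempty_of_card_le (by simpa using hn))
  exact containsCopy_iff_isContained.mpr
    (hG.trans ((not_cliqueFree_iff_top_isContained n).mp fun h => h S hS))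

theorem exists_forall_hasMonoCopy [Finite V] (G : SimpleGraph V) :
    ∃ r, ∀ c : Sym2 (Fin r) → Bool, HasMonoCopy G c := by
  have := Fintype.ofFinite V
  set n := Fintype.card V
  refine ⟨(n + n).choose n, fun c => ?_⟩
  rcases exists_isNClique_colorGraph c n n univ (by simp) with ⟨S, -, hS⟩ | ⟨S, -, hS⟩
  · exact ⟨true, containsCopy_of_isNClique hS n.le_succ⟩
  · exact ⟨false, containsCopy_of_isNClique hS n.le_succ⟩

-- `ramseyNumber` is an `sInf`, hence `0` if no `r` works: this needs `exists_forall_hasMonoCopy`.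
lemma lt_ramseyNumber_of_not_hasMonoCopy [Finite V] {G : SimpleGraph V} {n : ℕ}
    {c : Sym2 (Fin n) → Bool} (hc : ¬HasMonoCopy G c) : n < ramseyNumber G := by
  obtain ⟨r, hr⟩ := exists_forall_hasMonoCopy G
  by_contra! h
  exact hc (.of_comp_map (Fin.castLEEmb h)
    (Nat.sInf_mem (s := {r | ∀ c : Sym2 (Fin r) → Bool, HasMonoCopy G c}) ⟨r, hr⟩ _))

end RamseyNumber

lemma SimpleGraph.Reachable.iff_of_forall_adj {W : Type*} {H : SimpleGraph W} {q : W → Prop}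
    (hq : ∀ ⦃u v⦄, H.Adj u v → (q u ↔ q v)) {u v : W} (h : H.Reachable u v) : q u ↔ q v := by
  obtain ⟨w⟩ := h
  induction w with
  | nil => rfl
  | cons hadj _ ih => exact (hq hadj).trans ih

lemma card_le_card_filter_of_injective {V W : Type*} [Fintype V] [Fintype W] {f : V → W}
    (hf : Function.Injective f) {q : W → Prop} [DecidablePred q] (hq : ∀ i, q (f i)) :
    Fintype.card V ≤ #{w | q w} := by
  rw [← card_univ]
  exact card_le_card_of_injOn f (fun i _ => by simpa using hq i) hf.injOn

section TwoCliques

variable {V W : Type*} {p : W → Prop} {c : Sym2 W → Bool}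

/-- The two blue (`true`) cliques are `{w | p w}` and `{w | ¬p w}`; crossing edges are red. -/
def IsTwoCliqueColoring (c : Sym2 W → Bool) (p : W → Prop) : Prop :=
  ∀ u v, u ≠ v → (c s(u, v) = true ↔ (p u ↔ p v))

def twoCliqueColoring (p : W → Prop) [DecidablePred p] : Sym2 W → Bool :=
  Sym2.lift ⟨fun u v => decide (p u ↔ p v), fun u v => by simp only [Iff.comm]⟩

lemma isTwoCliqueColoring_twoCliqueColoring (p : W → Prop) [DecidablePred p] :
    IsTwoCliqueColoring (twoCliqueColoring p) p :=
  fun u v _ => by simp [twoCliqueColoring]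

namespace IsTwoCliqueColoring

lemma iff_of_adj_true (hc : IsTwoCliqueColoring c p) {u v : W}
    (h : (colorGraph c true).Adj u v) : p u ↔ p v :=
  (hc u v h.ne).mp (colorGraph_adj.mp h).2

lemma iff_not_of_adj_false (hc : IsTwoCliqueColoring c p) {u v : W}
    (h : (colorGraph c false).Adj u v) : p u ↔ ¬p v := by
  have := (hc u v h.ne).not.mp (by simp [(colorGraph_adj.mp h).2])
  tauto

variable [DecidablePred p] [Fintype W]

lemma card_le_or_card_le_of_copy_true (hc : IsTwoCliqueColoring c p) [Fintype V]
    {G : SimpleGraph V} (hG : G.Preconnected) (f : Copy G (colorGraph c true)) :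
    Fintype.card V ≤ #{w | p w} ∨ Fintype.card V ≤ #{w | ¬p w} := by
  cases isEmpty_or_nonempty V
  · simp
  obtain ⟨v⟩ := ‹Nonempty V›
  have hside (i : V) : p (f i) ↔ p (f v) :=
    ((hG i v).map f.toHom).iff_of_forall_adj fun _ _ h => hc.iff_of_adj_true h
  by_cases hv : p (f v)
  · exact .inl (card_le_card_filter_of_injective f.injective fun i => (hside i).mpr hv)
  · exact .inr (card_le_card_filter_of_injective f.injective fun i => mt (hside i).mp hv)

lemma half_le_card_of_copy_false (hc : IsTwoCliqueColoring c p) {k : ℕ}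
    (f : Copy (pathGraph k) (colorGraph c false)) : k / 2 ≤ #{w | ¬p w} := by
  have hpair (j : Fin (k / 2)) : ∃ i : Fin k, (i : ℕ) / 2 = j ∧ ¬p (f i) := by
    have hadj : (pathGraph k).Adj ⟨2 * j, by omega⟩ ⟨2 * j + 1, by omega⟩ :=
      pathGraph_adj.mpr (.inl rfl)
    by_cases h : p (f ⟨2 * j, by omega⟩)
    · exact ⟨_, by simp only; omega, (hc.iff_not_of_adj_false (f.toHom.map_adj hadj)).mp h⟩
    · exact ⟨_, by simp only; omega, h⟩
  choose e he using hpair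
  have he_inj : Function.Injective e := fun j j' h => Fin.ext (by rw [← (he j).1, ← (he j').1, h])
  simpa using card_le_card_filter_of_injective (f.injective.comp he_inj) fun j => (he j).2

theorem not_hasMonoCopy_pathGraph (hc : IsTwoCliqueColoring c p) {k : ℕ}
    (h₁ : #{w | p w} < k) (h₂ : #{w | ¬p w} < k / 2) : ¬HasMonoCopy (pathGraph k) c := by
  rintro ⟨b, hb⟩
  obtain ⟨f⟩ := containsCopy_iff_isContained.mp hb
  cases b with
  | false => exact (hc.half_le_card_of_copy_false f).not_gt h₂
  | true =>
    have := hc.card_le_or_card_le_of_copy_true (pathGraph_preconnected k) f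
    rw [Fintype.card_fin] at this
    omega

end IsTwoCliqueColoring

end TwoCliques

theorem path_ramsey_lower (k : ℕ) (hk : 4 ≤ k) :
    (∀ c : Sym2 (Fin (k + k / 2 - 2)) → Bool,
      (∀ u v : Fin (k + k / 2 - 2), u ≠ v →
        (c s(u, v) = true ↔ (((u : ℕ) < k - 1) ↔ ((v : ℕ) < k - 1)))) →
      ¬ HasMonoCopy (SimpleGraph.pathGraph k) c) ∧
    k + k / 2 - 1 ≤ ramseyNumber (SimpleGraph.pathGraph k) := by
  set N := k + k / 2 - 2 with hN
  have hbig : #{w : Fin N | (w : ℕ) < k - 1} = k - 1 := by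
    rw [Fin.card_filter_val_lt]
    omega
  have hsmall : #{w : Fin N | ¬(w : ℕ) < k - 1} = k / 2 - 1 := by
    have := card_filter_add_card_filter_not (s := univ) fun w : Fin N => (w : ℕ) < k - 1
    rw [card_univ, Fintype.card_fin, hbig] at this
    omega
  have hfree (c : Sym2 (Fin N) → Bool) (hc : IsTwoCliqueColoring c fun w => (w : ℕ) < k - 1) :
      ¬HasMonoCopy (pathGraph k) c :=
    hc.not_hasMonoCopy_pathGraph (by omega) (by omega)
  refine ⟨hfree, ?_⟩
  have := lt_ramseyNumber_of_not_hasMonoCopy (hfree _ (isTwoCliqueColoring_twoCliqueColoring _))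
  omega
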